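/- The weak limit μ of the normalized atomic measures μ_n = P(z_n,s)^{-1} Σ_{g∈G} j(g,z_n)^s δ_{g(z_n)} is an s-conformal measure for G: for every g ∈ G and every measurable set A in the closed ball, μ(g(A)) = ∫_A j(g,z)^s dμ(z). Equivalently, for each continuous f on the closed ball and each g ∈ G, ∫ f(g^{-1}(z)) dμ(z) = ∫ f(z) j(g,z)^s dμ(z). -/

import Mathlib

open MeasureTheory Filter
open scoped RealInnerProductSpace ENNReal BigOperators Topology

noncomputable section

/-- The ambient Euclidean space `ℝ^{N+1}`; hyperbolic space is its open unit
ball `𝔻` and the boundary sphere `𝕊` is the unit sphere. -/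
abbrev Amb (N : ℕ) := EuclideanSpace ℝ (Fin (N + 1))

/-- The conformal derivative `j(g,z) = (1-|g⁻¹0|²)/(|z*-g⁻¹0|²|z|²)` of a ball
automorphism `g` at a point `z` of the closed unit ball, where `z* = z/|z|²`
denotes inversion of `z` in the unit sphere.  It is written here via the
identity `|z*-w|²|z|² = 1 - 2⟪z,w⟫ + |z|²|w|²` (valid for `z ≠ 0`), which also
gives the correct value `1-|g⁻¹0|²` at `z = 0`; for `|z| = 1` it reduces to
`(1-|g⁻¹0|²)/|z-g⁻¹0|²`. -/
def cderiv {N : ℕ} (g : Equiv.Perm (Amb N)) (z : Amb N) : ℝ :=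
  (1 - ‖g.symm 0‖ ^ 2) /
    (1 - 2 * (inner ℝ z (g.symm 0) : ℝ) + ‖z‖ ^ 2 * ‖g.symm 0‖ ^ 2)

/-- `g` is a Möbius transformation of the closed unit ball: a homeomorphic
bijection of the ambient space preserving the closed ball, the open ball and
the boundary sphere, which is conformal with conformal factor `cderiv g`
(the metric characterisation `|gx-gy|² = j(g,x)j(g,y)|x-y|²` of Möbius maps). -/
structure IsMobius {N : ℕ} (g : Equiv.Perm (Amb N)) : Prop where
  maps_ball : ∀ z : Amb N, ‖z‖ ≤ 1 → ‖g z‖ ≤ 1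
  maps_open : ∀ z : Amb N, ‖z‖ < 1 → ‖g z‖ < 1
  maps_sphere : ∀ z : Amb N, ‖z‖ = 1 → ‖g z‖ = 1
  symm_maps_ball : ∀ z : Amb N, ‖z‖ ≤ 1 → ‖g.symm z‖ ≤ 1
  symm_maps_open : ∀ z : Amb N, ‖z‖ < 1 → ‖g.symm z‖ < 1
  continuous : Continuous fun z : Amb N => g z
  continuous_symm : Continuous fun z : Amb N => g.symm z
  conf : ∀ x y : Amb N, ‖x‖ ≤ 1 → ‖y‖ ≤ 1 →
    ‖g x - g y‖ ^ 2 = cderiv g x * cderiv g y * ‖x - y‖ ^ 2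

/-! Reindexing the orbit sum by `h ↦ g * h` and applying the cocycle rule shows that `f ∘ g⁻¹`
and `f · j(g,·)^s` have the same integral against every `μ_n`. The second function is not
bounded continuous on the whole space (`j(g,·)` blows up outside the ball), but on the closed
ball, which carries all `μ_n` and `μ`, it agrees with a bounded continuous function by Tietze;
so the equality passes to the weak limit `μ`. Finite Borel measures being determined by their
integrals of bounded continuous functions, this identifies `g⁻¹_* μ` with `j(g,·)^s μ`. -/

open Set Metric BoundedContinuousFunction

theorem IsCompact.exists_boundedContinuousFunction_eqOn {X : Type*} [TopologicalSpace X]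
    [NormalSpace X] [T2Space X] {K : Set X} (hK : IsCompact K) {φ : X → ℝ}
    (hφ : ContinuousOn φ K) : ∃ F : X →ᵇ ℝ, EqOn F φ K := by
  have : CompactSpace K := isCompact_iff_compactSpace.mp hK
  obtain ⟨F, -, hF⟩ := BoundedContinuousFunction.exists_norm_eq_domRestrict_eq_of_closed
    (BoundedContinuousFunction.mkOfCompact ⟨K.domRestrict φ, hφ.domRestrict⟩) hK.isClosed
  exact ⟨F, fun x hx => congrArg (fun f : K →ᵇ ℝ => f ⟨x, hx⟩) hF⟩

namespace MeasureTheory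

theorem isFiniteMeasure_sum_smul_dirac {ι X : Type*} [MeasurableSpace X] {w : ι → ℝ}
    (hw₀ : ∀ i, 0 ≤ w i) (hw : Summable w) (p : ι → X) :
    IsFiniteMeasure (Measure.sum fun i => ENNReal.ofReal (w i) • Measure.dirac (p i)) := by
  constructor
  simp only [Measure.sum_apply _ MeasurableSet.univ, Measure.smul_apply, measure_univ,
    smul_eq_mul, mul_one, ← ENNReal.ofReal_tsum_of_nonneg hw₀ hw, ENNReal.ofReal_lt_top]

theorem integral_sum_smul_dirac {ι X : Type*} [MeasurableSpace X] [TopologicalSpace X]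
    [OpensMeasurableSpace X] {w : ι → ℝ} (hw₀ : ∀ i, 0 ≤ w i) (hw : Summable w) (p : ι → X)
    (F : X →ᵇ ℝ) :
    ∫ x, F x ∂(Measure.sum fun i => ENNReal.ofReal (w i) • Measure.dirac (p i)) =
      ∑' i, w i * F (p i) := by
  have := isFiniteMeasure_sum_smul_dirac hw₀ hw p
  rw [integral_sum_measure (F.integrable _)]
  refine tsum_congr fun i => ?_
  rw [integral_smul_measure, integral_dirac' _ _ F.continuous.stronglyMeasurable,
    ENNReal.toReal_ofReal (hw₀ i), smul_eq_mul]

theorem Measure.map_eq_withDensity_of_forall_integral_eq {X : Type*} [MeasurableSpace X]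
    [TopologicalSpace X] [HasOuterApproxClosed X] [BorelSpace X] {μ : Measure X}
    [IsFiniteMeasure μ] {φ : X → X} (hφ : Measurable φ) {ρ : X → ℝ} (hρm : Measurable ρ)
    (hρi : Integrable ρ μ) (hρ₀ : 0 ≤ᵐ[μ] ρ)
    (h : ∀ f : X →ᵇ ℝ, ∫ x, f (φ x) ∂μ = ∫ x, f x * ρ x ∂μ) :
    μ.map φ = μ.withDensity fun x => ENNReal.ofReal (ρ x) := by
  have := isFiniteMeasure_withDensity_ofReal hρi.2
  refine ext_of_forall_integral_eq_of_IsFiniteMeasure fun f => ?_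
  rw [integral_map hφ.aemeasurable f.continuous.aestronglyMeasurable,
    integral_withDensity_eq_integral_toReal_smul hρm.ennreal_ofReal
      (ae_of_all _ fun _ => ENNReal.ofReal_lt_top), h f]
  refine integral_congr_ae (hρ₀.mono fun x hx => ?_)
  simp only [ENNReal.toReal_ofReal hx, smul_eq_mul, mul_comm]

end MeasureTheory

theorem one_sub_mul_norm_sq_le {E : Type*} [NormedAddCommGroup E] [InnerProductSpace ℝ E]
    (z w : E) : (1 - ‖z‖ * ‖w‖) ^ 2 ≤ 1 - 2 * ⟪z, w⟫ + ‖z‖ ^ 2 * ‖w‖ ^ 2 := by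
  nlinarith [real_inner_le_norm z w]

theorem measurable_cderiv {N : ℕ} (g : Equiv.Perm (Amb N)) : Measurable (cderiv g) := by
  unfold cderiv
  fun_prop

namespace IsMobius

variable {N : ℕ} {g : Equiv.Perm (Amb N)}

theorem norm_symm_zero_lt_one (hg : IsMobius g) : ‖g.symm 0‖ < 1 := by
  simpa using hg.symm_maps_open 0 (by simp)

theorem cderiv_denom_pos (hg : IsMobius g) {z : Amb N} (hz : ‖z‖ ≤ 1) :
    0 < 1 - 2 * ⟪z, g.symm 0⟫ + ‖z‖ ^ 2 * ‖g.symm 0‖ ^ 2 := by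
  have hzw : ‖z‖ * ‖g.symm 0‖ < 1 :=
    lt_of_le_of_lt (mul_le_of_le_one_left (norm_nonneg _) hz) hg.norm_symm_zero_lt_one
  nlinarith [one_sub_mul_norm_sq_le z (g.symm 0)]

theorem cderiv_pos (hg : IsMobius g) {z : Amb N} (hz : ‖z‖ ≤ 1) : 0 < cderiv g z := by
  have hw := hg.norm_symm_zero_lt_one
  exact div_pos (by nlinarith [norm_nonneg (g.symm 0)]) (hg.cderiv_denom_pos hz)

theorem continuousOn_cderiv_rpow (hg : IsMobius g) (s : ℝ) :
    ContinuousOn (fun x => cderiv g x ^ s) (closedBall 0 1) := by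
  have hball : ∀ x ∈ closedBall (0 : Amb N) 1, ‖x‖ ≤ 1 := fun x => mem_closedBall_zero_iff.mp
  refine ContinuousOn.rpow_const ?_ fun x hx => Or.inl (hg.cderiv_pos (hball x hx)).ne'
  exact continuousOn_const.div (by fun_prop) fun x hx => (hg.cderiv_denom_pos (hball x hx)).ne'

theorem exists_boundedContinuousFunction_eq_cderiv_rpow (hg : IsMobius g) (s : ℝ) :
    ∃ F : Amb N →ᵇ ℝ, ∀ x, ‖x‖ ≤ 1 → F x = cderiv g x ^ s := by
  obtain ⟨F, hF⟩ := (isCompact_closedBall (0 : Amb N) 1).exists_boundedContinuousFunction_eqOn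
    (hg.continuousOn_cderiv_rpow s)
  exact ⟨F, fun x hx => hF (mem_closedBall_zero_iff.mpr hx)⟩

end IsMobius

theorem tsum_cderiv_rpow_mul_comp_symm {N : ℕ} {G : Subgroup (Equiv.Perm (Amb N))}
    (hmob : ∀ g ∈ G, IsMobius g)
    (hcoc : ∀ g ∈ G, ∀ h ∈ G, ∀ z : Amb N, ‖z‖ ≤ 1 →
      cderiv (g * h) z = cderiv g (h z) * cderiv h z)
    (s : ℝ) {z : Amb N} (hz : ‖z‖ ≤ 1) {g : Equiv.Perm (Amb N)} (hg : g ∈ G)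
    (f : Amb N → ℝ) :
    ∑' h : G, cderiv h z ^ s * f (g.symm ((h : Equiv.Perm (Amb N)) z)) =
      ∑' h : G, cderiv h z ^ s *
        (f ((h : Equiv.Perm (Amb N)) z) * cderiv g ((h : Equiv.Perm (Amb N)) z) ^ s) := by
  rw [← (Equiv.mulLeft (⟨g, hg⟩ : G)).tsum_eq]
  refine tsum_congr fun h => ?_
  have hhz : ‖(h : Equiv.Perm (Amb N)) z‖ ≤ 1 := (hmob h h.2).maps_ball z hz
  simp only [Equiv.coe_mulLeft, Subgroup.coe_mul, Equiv.Perm.mul_apply, Equiv.symm_apply_apply]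
  rw [hcoc g hg h h.2 z hz, Real.mul_rpow ((hmob g hg).cderiv_pos hhz).le
    ((hmob h h.2).cderiv_pos hz).le]
  ring

theorem stmt_7_general {N : ℕ} (G : Subgroup (Equiv.Perm (Amb N)))
    (hmob : ∀ g ∈ G, IsMobius g)
    (hcoc : ∀ g ∈ G, ∀ h ∈ G, ∀ z : Amb N, ‖z‖ ≤ 1 →
      cderiv (g * h) z = cderiv g (h z) * cderiv h z)
    (s : ℝ)
    (z : ℕ → Amb N) (hz : ∀ n, ‖z n‖ < 1)
    (hsum : ∀ n, Summable fun g : G => cderiv (g : Equiv.Perm (Amb N)) (z n) ^ s)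
    (μ : Measure (Amb N)) [IsProbabilityMeasure μ]
    (hμball : μ {x : Amb N | 1 < ‖x‖} = 0)
    (hweak : ∀ f : BoundedContinuousFunction (Amb N) ℝ,
      Tendsto (fun n =>
          ∫ x, f x ∂((ENNReal.ofReal
              (∑' g : G, cderiv (g : Equiv.Perm (Amb N)) (z n) ^ s))⁻¹ •
            Measure.sum fun g : G =>
              ENNReal.ofReal (cderiv (g : Equiv.Perm (Amb N)) (z n) ^ s) •
                Measure.dirac ((g : Equiv.Perm (Amb N)) (z n))))
        atTop (𝓝 (∫ x, f x ∂μ))) :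
    (∀ g ∈ G, ∀ A : Set (Amb N), MeasurableSet A →
      μ (⇑g '' A) = ∫⁻ x in A, ENNReal.ofReal (cderiv g x ^ s) ∂μ) ∧
    (∀ f : BoundedContinuousFunction (Amb N) ℝ, ∀ g ∈ G,
      ∫ x, f (g.symm x) ∂μ = ∫ x, f x * cderiv g x ^ s ∂μ) := by
  have hball : ∀ᵐ x ∂μ, ‖x‖ ≤ 1 := ae_iff.mpr (by simpa only [not_le] using hμball)
  have hw₀ : ∀ n (h : G), 0 ≤ cderiv (h : Equiv.Perm (Amb N)) (z n) ^ s := fun n h =>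
    Real.rpow_nonneg ((hmob h h.2).cderiv_pos (hz n).le).le s
  have conformal : ∀ f : Amb N →ᵇ ℝ, ∀ g ∈ G,
      ∫ x, f (g.symm x) ∂μ = ∫ x, f x * cderiv g x ^ s ∂μ := by
    intro f g hg
    obtain ⟨F, hF⟩ := (hmob g hg).exists_boundedContinuousFunction_eq_cderiv_rpow s
    have hlim := tendsto_nhds_unique
      (hweak (f.compContinuous ⟨g.symm, (hmob g hg).continuous_symm⟩))
      ((hweak (f * F)).congr fun n => ?_)
    · simp only [compContinuous_apply, ContinuousMap.coe_mk, coe_mul, Pi.mul_apply] at hlim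
      rw [hlim]
      exact integral_congr_ae (hball.mono fun x hx => congrArg (f x * ·) (hF x hx))
    simp only [integral_smul_measure, integral_sum_smul_dirac (hw₀ n) (hsum n)]
    congr 1
    refine (tsum_congr fun h => ?_).trans
      (tsum_cderiv_rpow_mul_comp_symm hmob hcoc s (hz n).le hg f).symm
    rw [coe_mul, Pi.mul_apply, hF _ ((hmob h h.2).maps_ball _ (hz n).le)]
  refine ⟨fun g hg A hA => ?_, conformal⟩
  obtain ⟨F, hF⟩ := (hmob g hg).exists_boundedContinuousFunction_eq_cderiv_rpow s
  have hmap := Measure.map_eq_withDensity_of_forall_integral_eq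
    (hmob g hg).continuous_symm.measurable ((measurable_cderiv g).pow_const s)
    ((F.integrable μ).congr (hball.mono hF))
    (hball.mono fun x hx => Real.rpow_nonneg ((hmob g hg).cderiv_pos hx).le s)
    (fun f => conformal f g hg)
  rw [Equiv.image_eq_preimage_symm, ← Measure.map_apply (hmob g hg).continuous_symm.measurable hA,
    hmap, withDensity_apply _ hA]

/-- The weak limit `μ` of the normalized atomic measures
`μ_n = P(z_n,s)⁻¹ Σ_{g∈G} j(g,z_n)^s δ_{g(z_n)}` is an `s`-conformal measure
for `G`: `μ(g(A)) = ∫_A j(g,z)^s dμ` for every `g ∈ G` and measurable `A`;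
equivalently, `∫ f(g⁻¹z) dμ(z) = ∫ f(z) j(g,z)^s dμ(z)` for every bounded
continuous `f` and every `g ∈ G`. -/
theorem stmt_7 {N : ℕ} (G : Subgroup (Equiv.Perm (Amb N)))
    (hmob : ∀ g ∈ G, IsMobius g)
    (hcoc : ∀ g ∈ G, ∀ h ∈ G, ∀ z : Amb N, ‖z‖ ≤ 1 →
      cderiv (g * h) z = cderiv g (h z) * cderiv h z)
    (s : ℝ) (hs : 0 < s)
    (z : ℕ → Amb N) (hz : ∀ n, ‖z n‖ < 1)
    (hsum : ∀ n, Summable fun g : G => cderiv (g : Equiv.Perm (Amb N)) (z n) ^ s)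
    (μ : Measure (Amb N)) [IsProbabilityMeasure μ]
    (hμball : μ {x : Amb N | 1 < ‖x‖} = 0)
    (hweak : ∀ f : BoundedContinuousFunction (Amb N) ℝ,
      Tendsto (fun n =>
          ∫ x, f x ∂((ENNReal.ofReal
              (∑' g : G, cderiv (g : Equiv.Perm (Amb N)) (z n) ^ s))⁻¹ •
            Measure.sum fun g : G =>
              ENNReal.ofReal (cderiv (g : Equiv.Perm (Amb N)) (z n) ^ s) •
                Measure.dirac ((g : Equiv.Perm (Amb N)) (z n))))
        atTop (𝓝 (∫ x, f x ∂μ))) :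
    (∀ g ∈ G, ∀ A : Set (Amb N), MeasurableSet A →
      μ (⇑g '' A) = ∫⁻ x in A, ENNReal.ofReal (cderiv g x ^ s) ∂μ) ∧
    (∀ f : BoundedContinuousFunction (Amb N) ℝ, ∀ g ∈ G,
      ∫ x, f (g.symm x) ∂μ = ∫ x, f x * cderiv g x ^ s ∂μ) :=
  stmt_7_general G hmob hcoc s z hz hsum μ hμball hweak
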